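/- A finite rooted graph G=G(r) is isomorphic as a rooted graph to a rooted cluster G_{X,r̃}(ν₀) for some unbounded metric space (X,d) and some scaling sequence r̃ if and only if the root r is a dominating vertex of G. -/

import Mathlib

open Filter Topology
open scoped Classical

/-- An unbounded metric space. -/
def UnboundedSpace (X : Type*) [MetricSpace X] : Prop :=
  ¬ Bornology.IsBounded (Set.univ : Set X)

/-- A scaling sequence: positive reals tending to infinity. -/
def ScalingSeq (r : ℕ → ℝ) : Prop :=
  (∀ n, 0 < r n) ∧ Filter.Tendsto r Filter.atTop Filter.atTop

/-- Two sequences are mutually stable w.r.t. `r` if `d(x_n, y_n)/r_n` has a finite limit. -/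
def MutuallyStable {X : Type*} [MetricSpace X] (r : ℕ → ℝ) (x y : ℕ → X) : Prop :=
  ∃ L : ℝ, Filter.Tendsto (fun n => dist (x n) (y n) / r n) Filter.atTop (nhds L)

/-- `Seq(X, r̃)`: sequences going to infinity such that `d(x_n, p)/r_n` has a finite limit. -/
def SeqInf {X : Type*} [MetricSpace X] (r : ℕ → ℝ) (p : X) : Set (ℕ → X) :=
  {x | Filter.Tendsto (fun n => dist (x n) p) Filter.atTop Filter.atTop ∧
    ∃ L : ℝ, Filter.Tendsto (fun n => dist (x n) p / r n) Filter.atTop (nhds L)}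

/-- The relation `x̃ ≡ ỹ`, i.e. `d(x_n, y_n)/r_n → 0`. -/
def EquivSeq {X : Type*} [MetricSpace X] (r : ℕ → ℝ) (x y : ℕ → X) : Prop :=
  Filter.Tendsto (fun n => dist (x n) (y n) / r n) Filter.atTop (nhds 0)

/-- The `≡`-equivalence class of `x` inside `Seq(X, r̃)`. -/
def classOf {X : Type*} [MetricSpace X] (r : ℕ → ℝ) (p : X) (x : ℕ → X) : Set (ℕ → X) :=
  {y | y ∈ SeqInf r p ∧ EquivSeq r x y}

/-- The vertex set of the cluster graph `G_{X, r̃}`: all `≡`-classes of `Seq(X, r̃)`. -/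
def VertexSet {X : Type*} [MetricSpace X] (r : ℕ → ℝ) (p : X) : Set (Set (ℕ → X)) :=
  {v | ∃ x ∈ SeqInf r p, v = classOf r p x}

/-- Adjacency in the cluster graph `G_{X, r̃}`: distinct classes whose representatives
are mutually stable. -/
def AdjacentCl {X : Type*} [MetricSpace X] (r : ℕ → ℝ) (p : X) (u v : Set (ℕ → X)) : Prop :=
  u ∈ VertexSet r p ∧ v ∈ VertexSet r p ∧ u ≠ v ∧
    ∀ x ∈ u, ∀ y ∈ v, MutuallyStable r x y

/-- The weight `ρ_X` on the cluster graph: for an edge `{u,v}` it is the (unique) limit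
`lim d(x_n, y_n)/r_n` for representatives. -/
noncomputable def rhoX {X : Type*} [MetricSpace X] (r : ℕ → ℝ) (u v : Set (ℕ → X)) : ℝ :=
  sSup {L : ℝ | ∃ x ∈ u, ∃ y ∈ v,
    Filter.Tendsto (fun n => dist (x n) (y n) / r n) Filter.atTop (nhds L)}

/-- The root `ν₀ = X̃⁰_{∞,r̃}`: sequences with `d(z_n,p) → ∞` and `d(z_n,p)/r_n → 0`. -/
def rootClass {X : Type*} [MetricSpace X] (r : ℕ → ℝ) (p : X) : Set (ℕ → X) :=
  {z | Filter.Tendsto (fun n => dist (z n) p) Filter.atTop Filter.atTop ∧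
    Filter.Tendsto (fun n => dist (z n) p / r n) Filter.atTop (nhds 0)}

/-- The labeling `ρ⁰` of vertices: `ρ⁰(v) = lim d(x_n,p)/r_n` for `x̃ ∈ v`. -/
noncomputable def rho0 {X : Type*} [MetricSpace X] (r : ℕ → ℝ) (p : X)
    (v : Set (ℕ → X)) : ℝ :=
  sSup {L : ℝ | ∃ x ∈ v, Filter.Tendsto (fun n => dist (x n) p / r n) Filter.atTop (nhds L)}

/-- A self-stable family: a subset of `Seq(X, r̃)` any two of whose members are
mutually stable. -/
def SelfStable {X : Type*} [MetricSpace X] (r : ℕ → ℝ) (p : X) (F : Set (ℕ → X)) : Prop :=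
  F ⊆ SeqInf r p ∧ ∀ x ∈ F, ∀ y ∈ F, MutuallyStable r x y

/-- A maximal self-stable set `X̃_{∞, r̃}`. -/
def MaxSelfStable {X : Type*} [MetricSpace X] (r : ℕ → ℝ) (p : X) (F : Set (ℕ → X)) : Prop :=
  SelfStable r p F ∧ ∀ F', SelfStable r p F' → F ⊆ F' → F = F'

/-- The pretangent space `Ω^X_{∞,r̃}` attached to a maximal self-stable set `F`:
the set of `≡`-classes of members of `F`. -/
def PretangentCl {X : Type*} [MetricSpace X] (r : ℕ → ℝ) (F : Set (ℕ → X)) :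
    Set (Set (ℕ → X)) :=
  {v | ∃ x ∈ F, v = {y | y ∈ F ∧ EquivSeq r x y}}

/-- A clique in the cluster graph `G_{X, r̃}`. -/
def IsCliqueCl {X : Type*} [MetricSpace X] (r : ℕ → ℝ) (p : X)
    (C : Set (Set (ℕ → X))) : Prop :=
  C ⊆ VertexSet r p ∧ ∀ u ∈ C, ∀ v ∈ C, u ≠ v → AdjacentCl r p u v

/-!
Every vertex of a cluster graph is adjacent to the root `ν₀`: for `z̃ ∈ ν₀` we have
`|d(z_n, y_n) - d(y_n, p)| ≤ d(z_n, p) = o(r_n)`, so `d(z_n, y_n) / r_n` and `d(y_n, p) / r_n`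
have the same limit.

Conversely, let `i₀` dominate a finite graph `H`. Take `r_n = 2^(n² + n)` and points `p` and
`(i, m)`, at distance `w_i(m) r_m` from `p`, where `w_{i₀}(m) = 2⁻ᵐ` and the other `w_i` are
distinct positive integers. Distinct points are at distance the sum of their distances to `p`,
except that on odd levels `m` the points `(i, m)`, `(j, m)` with `i, j` non-adjacent are at
distance the maximum of the two; such a hedgehog with shortcuts is a metric space. The sequences
`((i, m))_m` represent the vertices: the gaps between the levels force every sequence with
`d(x_n, p) / r_n → L > 0` to eventually coincide with one of them, and `d((i, n), (j, n)) / r_n`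
is constant for adjacent `i, j` but oscillates for non-adjacent ones.
-/

theorem Filter.Tendsto.eventually_eq_of_eventually_mem_finite {α Y : Type*} [TopologicalSpace Y]
    [T1Space Y] {l : Filter α} {f : α → Y} {a : Y} {S : Set Y} (hS : S.Finite)
    (hf : Tendsto f l (𝓝 a)) (hfS : ∀ᶠ t in l, f t ∈ S) : ∀ᶠ t in l, f t = a := by
  have hnhds : (S \ {a})ᶜ ∈ 𝓝 a := (hS.sdiff.isClosed).isOpen_compl.mem_nhds (by simp)
  filter_upwards [hfS, hf hnhds] with t hS' hne
  by_contra h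
  exact hne ⟨hS', h⟩

section ClusterGraph

variable {X : Type*} [MetricSpace X] {r : ℕ → ℝ} {p : X} {x x' y y' z : ℕ → X}

theorem equivSeq_refl (r : ℕ → ℝ) (x : ℕ → X) : EquivSeq r x x := by
  simp only [EquivSeq, dist_self, zero_div, tendsto_const_nhds]

theorem EquivSeq.symm (h : EquivSeq r x y) : EquivSeq r y x := by
  simpa only [EquivSeq, dist_comm] using h

theorem equivSeq_of_eventuallyEq (h : x =ᶠ[atTop] y) : EquivSeq r x y :=
  tendsto_const_nhds.congr' <| h.mono fun n hn => by simp [hn]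

theorem equivSeq_const_iff :
    EquivSeq r (fun _ => p) x ↔ Tendsto (fun n => dist (x n) p / r n) atTop (𝓝 0) := by
  simp only [EquivSeq, dist_comm p]

theorem MutuallyStable.symm (h : MutuallyStable r x y) : MutuallyStable r y x := by
  simpa only [MutuallyStable, dist_comm] using h

theorem Filter.Tendsto.dist_div_of_equivSeq (hr : ∀ n, 0 < r n) {L : ℝ}
    (h : Tendsto (fun n => dist (x n) (y n) / r n) atTop (𝓝 L))
    (hx : EquivSeq r x x') (hy : EquivSeq r y y') :
    Tendsto (fun n => dist (x' n) (y' n) / r n) atTop (𝓝 L) := by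
  refine h.congr_dist (squeeze_zero (fun _ => dist_nonneg) (fun n => ?_) (by simpa using hx.add hy))
  rw [Real.dist_eq, ← sub_div, abs_div, abs_of_pos (hr n), ← add_div]
  exact div_le_div_of_nonneg_right (dist_dist_dist_le _ _ _ _) (hr n).le

theorem EquivSeq.trans (hr : ∀ n, 0 < r n) (hxy : EquivSeq r x y) (hyz : EquivSeq r y z) :
    EquivSeq r x z :=
  Tendsto.dist_div_of_equivSeq hr hyz hxy.symm (equivSeq_refl r z)

theorem mem_classOf_self (hx : x ∈ SeqInf r p) : x ∈ classOf r p x :=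
  ⟨hx, equivSeq_refl r x⟩

theorem classOf_eq_classOf_iff (hr : ∀ n, 0 < r n) (hy : y ∈ SeqInf r p) :
    classOf r p x = classOf r p y ↔ EquivSeq r x y := by
  refine ⟨fun h => (h ▸ mem_classOf_self hy : y ∈ classOf r p x).2, fun h => ?_⟩
  ext z
  exact ⟨fun hz => ⟨hz.1, h.symm.trans hr hz.2⟩, fun hz => ⟨hz.1, h.trans hr hz.2⟩⟩

theorem mutuallyStable_of_mem_rootClass (hr : ∀ n, 0 < r n) (hz : z ∈ rootClass r p)
    (hy : y ∈ SeqInf r p) : MutuallyStable r z y := by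
  obtain ⟨-, L, hL⟩ := hy
  refine ⟨L, Tendsto.dist_div_of_equivSeq hr (x := fun _ => p) ?_ (equivSeq_const_iff.2 hz.2)
    (equivSeq_refl r y)⟩
  simpa only [dist_comm p] using hL

theorem classOf_eq_rootClass (hr : ∀ n, 0 < r n) (hz : z ∈ rootClass r p) :
    classOf r p z = rootClass r p := by
  have hz₀ : EquivSeq r (fun _ => p) z := equivSeq_const_iff.2 hz.2
  ext y
  refine ⟨fun ⟨hy, hzy⟩ => ⟨hy.1, equivSeq_const_iff.1 (hz₀.trans hr hzy)⟩,
    fun ⟨hy, hy₀⟩ => ⟨⟨hy, 0, hy₀⟩, hz₀.symm.trans hr (equivSeq_const_iff.2 hy₀)⟩⟩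

theorem adjacentCl_classOf_iff (hr : ∀ n, 0 < r n) (hx : x ∈ SeqInf r p) (hy : y ∈ SeqInf r p) :
    AdjacentCl r p (classOf r p x) (classOf r p y) ↔
      classOf r p x ≠ classOf r p y ∧ MutuallyStable r x y := by
  refine ⟨fun h => ⟨h.2.2.1, h.2.2.2 x (mem_classOf_self hx) y (mem_classOf_self hy)⟩,
    fun ⟨hne, L, hL⟩ => ⟨⟨x, hx, rfl⟩, ⟨y, hy, rfl⟩, hne, fun x' hx' y' hy' => ?_⟩⟩
  exact ⟨L, hL.dist_div_of_equivSeq hr hx'.2 hy'.2⟩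

theorem unboundedSpace_of_tendsto_dist (h : Tendsto (fun n => dist (x n) p) atTop atTop) :
    UnboundedSpace X := by
  intro hb
  obtain ⟨C, hC⟩ := Metric.isBounded_iff.1 hb
  obtain ⟨n, hn⟩ := (h.eventually_gt_atTop C).exists
  exact (hC (Set.mem_univ (x n)) (Set.mem_univ p)).not_gt hn

end ClusterGraph

section ShortcutMetric

variable {T : Type*} {ρ : T → ℝ} {R : T → T → Prop}

noncomputable def shortcutDist (ρ : T → ℝ) (R : T → T → Prop) (x y : T) : ℝ :=
  if x = y then 0 else if R x y then max (ρ x) (ρ y) else ρ x + ρ y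

theorem max_le_shortcutDist (hρ : ∀ x, 0 ≤ ρ x) {x y : T} (h : x ≠ y) :
    max (ρ x) (ρ y) ≤ shortcutDist ρ R x y := by
  rw [shortcutDist, if_neg h]
  split_ifs
  · exact le_rfl
  · exact max_le_add_of_nonneg (hρ x) (hρ y)

theorem shortcutDist_le (hρ : ∀ x, 0 ≤ ρ x) (x y : T) : shortcutDist ρ R x y ≤ ρ x + ρ y := by
  unfold shortcutDist
  split_ifs
  · exact add_nonneg (hρ x) (hρ y)
  · exact max_le_add_of_nonneg (hρ x) (hρ y)
  · exact le_rfl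

theorem shortcutDist_comm (hR : ∀ x y, R x y → R y x) (x y : T) :
    shortcutDist ρ R x y = shortcutDist ρ R y x := by
  simp only [shortcutDist, eq_comm (a := x), max_comm (ρ x), add_comm (ρ x),
    show R x y ↔ R y x from ⟨hR x y, hR y x⟩]

theorem shortcutDist_triangle (hρ : ∀ x, 0 ≤ ρ x) (x y z : T) :
    shortcutDist ρ R x z ≤ shortcutDist ρ R x y + shortcutDist ρ R y z := by
  rcases eq_or_ne x y with rfl | hxy
  · simp [shortcutDist]
  rcases eq_or_ne y z with rfl | hyz
  · simp [shortcutDist]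
  calc shortcutDist ρ R x z ≤ ρ x + ρ z := shortcutDist_le hρ x z
    _ ≤ shortcutDist ρ R x y + shortcutDist ρ R y z :=
      add_le_add ((le_max_left _ _).trans (max_le_shortcutDist hρ hxy))
        ((le_max_right _ _).trans (max_le_shortcutDist hρ hyz))

noncomputable abbrev shortcutMetricSpace (hρ : ∀ x, 0 ≤ ρ x) (hR : ∀ x y, R x y → R y x)
    (hpos : ∀ x y, x ≠ y → 0 < max (ρ x) (ρ y)) : MetricSpace T where
  dist := shortcutDist ρ R
  dist_self _ := if_pos rfl
  dist_comm := shortcutDist_comm hR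
  dist_triangle := shortcutDist_triangle hρ
  eq_of_dist_eq_zero {x y} h := by
    by_contra hxy
    exact (hpos x y hxy).not_ge ((max_le_shortcutDist hρ hxy).trans h.le)

end ShortcutMetric

/-- The rooted graph `G(rt)` is isomorphic to the rooted cluster graph `G_{X,r̃}(ν₀)` of some
unbounded metric space `X` and scaling sequence `r̃`. -/
def IsRootedCluster {V : Type*} (G : SimpleGraph V) (rt : V) : Prop :=
  ∃ (X : Type) (_ : MetricSpace X), UnboundedSpace X ∧
    ∃ r : ℕ → ℝ, ScalingSeq r ∧ ∃ p : X, ∃ f : V → Set (ℕ → X),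
      Function.Injective f ∧ (∀ a, f a ∈ VertexSet r p) ∧
      (∀ u ∈ VertexSet r p, ∃ a, f a = u) ∧
      f rt = rootClass r p ∧
      (∀ a b : V, G.Adj a b ↔ AdjacentCl r p (f a) (f b))

namespace IsRootedCluster

variable {V W : Type*} {G : SimpleGraph V} {G' : SimpleGraph W} {rt : V}

theorem adj_root (h : IsRootedCluster G rt) (v : V) (hv : v ≠ rt) : G.Adj rt v := by
  obtain ⟨X, _, -, r, hr, p, f, hf, hmem, -, hroot, hadj⟩ := h
  obtain ⟨z, hz, hfz⟩ := hmem rt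
  obtain ⟨y, hy, hfy⟩ := hmem v
  have hz₀ : z ∈ rootClass r p := hroot ▸ hfz ▸ mem_classOf_self hz
  rw [hadj, hfz, hfy, adjacentCl_classOf_iff hr.1 hz hy, ← hfz, ← hfy]
  exact ⟨hf.ne hv.symm, mutuallyStable_of_mem_rootClass hr.1 hz₀ hy⟩

theorem of_iso (e : G ≃g G') (h : IsRootedCluster G' (e rt)) : IsRootedCluster G rt := by
  obtain ⟨X, _, hX, r, hr, p, f, hf, hmem, hsurj, hroot, hadj⟩ := h
  refine ⟨X, _, hX, r, hr, p, f ∘ e, hf.comp e.injective, fun a => hmem (e a),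
    fun u hu => ?_, hroot, fun a b => e.map_adj_iff.symm.trans (hadj _ _)⟩
  obtain ⟨a, rfl⟩ := hsurj u hu
  exact ⟨e.symm a, by simp⟩

end IsRootedCluster

/-- `none` is the base point and `some (i, m)` the `m`-th term of the sequence representing `i`;
the parameters only select the metric. -/
def ConeSpace {ι : Type} (_H : SimpleGraph ι) (_i₀ : ι) : Type := Option (ι × ℕ)

namespace ConeSpace

noncomputable def scale (n : ℕ) : ℝ := 2 ^ (n ^ 2 + n)

theorem scale_pos (n : ℕ) : 0 < scale n := by unfold scale; positivity

theorem scalingSeq_scale : ScalingSeq scale :=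
  ⟨scale_pos, tendsto_atTop_mono (fun n => pow_le_pow_right₀ one_le_two (by nlinarith))
    (tendsto_pow_atTop_atTop_of_one_lt one_lt_two)⟩

theorem scale_mul_two_pow_le {m n : ℕ} (h : m < n) : scale m * 2 ^ n ≤ scale n := by
  rw [scale, scale, ← pow_add]
  exact pow_le_pow_right₀ one_le_two (by nlinarith)

theorem two_pow_mul_scale_le {m n : ℕ} (h : n < m) : 2 ^ n * scale n ≤ 2 ^ (m ^ 2) := by
  rw [scale, ← pow_add]
  exact pow_le_pow_right₀ one_le_two (by nlinarith)

theorem inv_two_pow_mul_scale (m : ℕ) : (2 ^ m)⁻¹ * scale m = 2 ^ (m ^ 2) := by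
  rw [scale, pow_add, mul_comm, mul_assoc, mul_inv_cancel₀ (by positivity), mul_one]

variable {ι : Type} {H : SimpleGraph ι} {i₀ i j : ι}

def Shortcut : ConeSpace H i₀ → ConeSpace H i₀ → Prop
  | some (i, m), some (j, n) => m = n ∧ Odd m ∧ ¬H.Adj i j
  | _, _ => False

theorem shortcut_symm (x y : ConeSpace H i₀) : Shortcut x y → Shortcut y x := by
  rcases x with _ | ⟨i, m⟩ <;> rcases y with _ | ⟨j, n⟩ <;> simp only [Shortcut, imp_self]
  exact fun ⟨hmn, hm, hij⟩ => ⟨hmn.symm, hmn ▸ hm, fun h => hij h.symm⟩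

def apex : ConeSpace H i₀ := none

variable (H i₀) in
def seq (i : ι) (m : ℕ) : ConeSpace H i₀ := some (i, m)

theorem eq_apex_or_exists_eq_seq (y : ConeSpace H i₀) : y = apex ∨ ∃ j m, y = seq H i₀ j m := by
  rcases y with _ | ⟨j, m⟩
  · exact Or.inl rfl
  · exact Or.inr ⟨j, m, rfl⟩

theorem seq_ne_seq (hij : i ≠ j) (m n : ℕ) : seq H i₀ i m ≠ seq H i₀ j n := fun h =>
  hij (Prod.ext_iff.1 (Option.some.inj h)).1

variable [Fintype ι]

noncomputable def label (i : ι) : ℝ := (Fintype.equivFin ι i : ℕ) + 1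

theorem one_le_label (i : ι) : 1 ≤ label i := by simp [label]

theorem label_le_card (i : ι) : label i ≤ Fintype.card ι := by
  rw [label, ← Nat.cast_add_one, Nat.cast_le]
  exact (Fintype.equivFin ι i).isLt

theorem label_injective : Function.Injective (label : ι → ℝ) := fun i j h =>
  (Fintype.equivFin ι).injective <| Fin.ext <| by simpa [label] using h

variable (i₀) in
noncomputable def weight (i : ι) (m : ℕ) : ℝ := if i = i₀ then (2 ^ m)⁻¹ else label i

theorem inv_two_pow_le_weight (i : ι) (m : ℕ) : (2 ^ m)⁻¹ ≤ weight i₀ i m := by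
  unfold weight
  split_ifs
  · exact le_rfl
  · exact (inv_le_one_of_one_le₀ (one_le_pow₀ one_le_two)).trans (one_le_label i)

theorem weight_pos (i : ι) (m : ℕ) : 0 < weight i₀ i m :=
  (inv_pos.2 (by positivity)).trans_le (inv_two_pow_le_weight i m)

theorem weight_le_card (i : ι) (m : ℕ) : weight i₀ i m ≤ Fintype.card ι := by
  unfold weight
  split_ifs with h
  · exact (inv_le_one_of_one_le₀ (one_le_pow₀ one_le_two)).trans
      (Nat.one_le_cast.2 (Fintype.card_pos_iff.2 ⟨i₀⟩))
  · exact label_le_card i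

theorem one_le_max_weight (hij : i ≠ j) (m : ℕ) : 1 ≤ max (weight i₀ i m) (weight i₀ j m) := by
  by_cases hi : i = i₀
  · exact (one_le_label j).trans_eq (if_neg (hi ▸ hij.symm)).symm |>.trans (le_max_right _ _)
  · exact (one_le_label i).trans_eq (if_neg hi).symm |>.trans (le_max_left _ _)

noncomputable def radius : ConeSpace H i₀ → ℝ
  | none => 0
  | some (i, m) => weight i₀ i m * scale m

theorem radius_nonneg (x : ConeSpace H i₀) : 0 ≤ radius x := by
  rcases x with _ | ⟨i, m⟩
  · exact le_rfl
  · exact mul_nonneg (weight_pos i m).le (scale_pos m).le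

theorem max_radius_pos {x y : ConeSpace H i₀} (h : x ≠ y) : 0 < max (radius x) (radius y) := by
  rcases x with _ | ⟨i, m⟩
  · rcases y with _ | ⟨j, n⟩
    · exact absurd rfl h
    · exact lt_max_of_lt_right (mul_pos (weight_pos j n) (scale_pos n))
  · exact lt_max_of_lt_left (mul_pos (weight_pos i m) (scale_pos m))

noncomputable instance : MetricSpace (ConeSpace H i₀) :=
  shortcutMetricSpace radius_nonneg shortcut_symm fun _ _ => max_radius_pos

theorem dist_eq_shortcutDist (x y : ConeSpace H i₀) : dist x y = shortcutDist radius Shortcut x y :=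
  rfl

theorem dist_seq_apex_div_scale (i : ι) (m : ℕ) :
    dist (seq H i₀ i m) apex / scale m = weight i₀ i m := by
  have hne : seq H i₀ i m ≠ apex := Option.some_ne_none (i, m)
  have hnot : ¬Shortcut (seq H i₀ i m) apex := not_false
  rw [dist_eq_shortcutDist, shortcutDist, if_neg hne, if_neg hnot]
  simp only [seq, apex, radius, add_zero, mul_div_cancel_right₀ _ (scale_pos m).ne']

theorem dist_seq_apex_div_scale_of_ne (hi : i ≠ i₀) (m : ℕ) :
    dist (seq H i₀ i m) apex / scale m = label i := by
  rw [dist_seq_apex_div_scale, weight, if_neg hi]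

theorem tendsto_dist_seq_atTop (i : ι) :
    Tendsto (fun m => dist (seq H i₀ i m) apex) atTop atTop := by
  refine tendsto_atTop_mono (fun m => ?_) (tendsto_pow_atTop_atTop_of_one_lt one_lt_two)
  calc (2 : ℝ) ^ m ≤ 2 ^ (m ^ 2) := pow_le_pow_right₀ one_le_two (Nat.le_self_pow two_ne_zero m)
    _ = (2 ^ m)⁻¹ * scale m := (inv_two_pow_mul_scale m).symm
    _ ≤ weight i₀ i m * scale m :=
      mul_le_mul_of_nonneg_right (inv_two_pow_le_weight i m) (scale_pos m).le
    _ = dist (seq H i₀ i m) apex := by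
      rw [← dist_seq_apex_div_scale, div_mul_cancel₀ _ (scale_pos m).ne']

theorem seq_mem_rootClass : seq H i₀ i₀ ∈ rootClass scale apex := by
  refine ⟨tendsto_dist_seq_atTop i₀, ?_⟩
  simp only [dist_seq_apex_div_scale, weight, if_pos]
  exact tendsto_inv_atTop_zero.comp (tendsto_pow_atTop_atTop_of_one_lt one_lt_two)

theorem seq_mem_seqInf (i : ι) : seq H i₀ i ∈ SeqInf scale apex := by
  rcases eq_or_ne i i₀ with rfl | hi
  · exact ⟨tendsto_dist_seq_atTop i, 0, seq_mem_rootClass.2⟩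
  · exact ⟨tendsto_dist_seq_atTop i, label i,
      tendsto_const_nhds.congr fun m => (dist_seq_apex_div_scale_of_ne hi m).symm⟩

theorem max_weight_le_dist_seq_div_scale (hij : i ≠ j) (m : ℕ) :
    max (weight i₀ i m) (weight i₀ j m) ≤ dist (seq H i₀ i m) (seq H i₀ j m) / scale m := by
  rw [le_div_iff₀ (scale_pos m), max_mul_of_nonneg _ _ (scale_pos m).le]
  exact max_le_shortcutDist radius_nonneg (seq_ne_seq hij m m)

theorem dist_seq_seq_div_scale (hi : i ≠ i₀) (hj : j ≠ i₀) (hij : i ≠ j) (m : ℕ) :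
    dist (seq H i₀ i m) (seq H i₀ j m) / scale m =
      if Odd m ∧ ¬H.Adj i j then max (label i) (label j) else label i + label j := by
  have hshort : Shortcut (seq H i₀ i m) (seq H i₀ j m) ↔ Odd m ∧ ¬H.Adj i j :=
    ⟨fun h => h.2, fun h => ⟨rfl, h⟩⟩
  have hradius (k : ι) (hk : k ≠ i₀) : radius (seq H i₀ k m) = label k * scale m := by
    simp only [seq, radius, weight, if_neg hk]
  rw [dist_eq_shortcutDist, shortcutDist, if_neg (seq_ne_seq hij m m), hradius i hi, hradius j hj]
  simp only [hshort, ← max_mul_of_nonneg _ _ (scale_pos m).le, ← add_mul, apply_ite (· / scale m),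
    mul_div_cancel_right₀ _ (scale_pos m).ne']

theorem exists_eq_seq_of_mem_Ioo {y : ConeSpace H i₀} {n : ℕ}
    (h : dist y apex / scale n ∈ Set.Ioo ((Fintype.card ι : ℝ) / 2 ^ n) (2 ^ n)) :
    ∃ i ≠ i₀, y = seq H i₀ i n := by
  obtain rfl | ⟨j, m, rfl⟩ := eq_apex_or_exists_eq_seq y
  · rw [dist_self, zero_div] at h
    exact absurd h.1 (not_lt.2 (by positivity))
  rw [← div_mul_cancel₀ (dist _ _) (scale_pos m).ne', dist_seq_apex_div_scale] at h
  rcases lt_trichotomy m n with hmn | rfl | hnm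
  · refine absurd h.1 (not_lt.2 ?_)
    rw [div_le_div_iff₀ (scale_pos n) (by positivity)]
    calc weight i₀ j m * scale m * 2 ^ n ≤ Fintype.card ι * (scale m * 2 ^ n) := by
          rw [mul_assoc]
          exact mul_le_mul_of_nonneg_right (weight_le_card j m) (by positivity [scale_pos m])
      _ ≤ Fintype.card ι * scale n :=
          mul_le_mul_of_nonneg_left (scale_mul_two_pow_le hmn) (Nat.cast_nonneg _)
  · rcases eq_or_ne j i₀ with rfl | hj
    · refine absurd h.1 (not_lt.2 ?_)
      rw [mul_div_cancel_right₀ _ (scale_pos m).ne', weight, if_pos rfl, inv_eq_one_div]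
      gcongr
      exact Nat.one_le_cast.2 (Fintype.card_pos_iff.2 ⟨j⟩)
    · exact ⟨j, hj, rfl⟩
  · refine absurd h.2 (not_lt.2 ?_)
    rw [le_div_iff₀ (scale_pos n)]
    calc 2 ^ n * scale n ≤ 2 ^ (m ^ 2) := two_pow_mul_scale_le hnm
      _ = (2 ^ m)⁻¹ * scale m := (inv_two_pow_mul_scale m).symm
      _ ≤ weight i₀ j m * scale m :=
        mul_le_mul_of_nonneg_right (inv_two_pow_le_weight j m) (scale_pos m).le

theorem exists_eventuallyEq_seq {x : ℕ → ConeSpace H i₀} {L : ℝ} (hL : 0 < L)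
    (hx : Tendsto (fun n => dist (x n) apex / scale n) atTop (𝓝 L)) :
    ∃ i, x =ᶠ[atTop] seq H i₀ i := by
  have htwo : Tendsto (fun n : ℕ => (2 : ℝ) ^ n) atTop atTop :=
    tendsto_pow_atTop_atTop_of_one_lt one_lt_two
  have hlo : ∀ᶠ n in atTop, (Fintype.card ι : ℝ) / 2 ^ n < dist (x n) apex / scale n :=
    (tendsto_const_nhds.div_atTop htwo).eventually_lt hx hL
  have hhi : ∀ᶠ n in atTop, dist (x n) apex / scale n < 2 ^ n :=
    ((hx.eventually_lt_const (lt_add_one L)).and (htwo.eventually_gt_atTop (L + 1))).mono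
      fun n h => h.1.trans h.2
  have hseq : ∀ᶠ n in atTop, ∃ i ≠ i₀, x n = seq H i₀ i n :=
    (hlo.and hhi).mono fun n h => exists_eq_seq_of_mem_Ioo h
  -- the ratios eventually lie in the finite set of labels, so they are eventually equal to `L`
  have hratio : ∀ᶠ n in atTop, dist (x n) apex / scale n = L :=
    hx.eventually_eq_of_eventually_mem_finite (Set.finite_range label) <|
      hseq.mono fun n ⟨i, hi, hxi⟩ => ⟨i, by rw [hxi, dist_seq_apex_div_scale_of_ne hi]⟩
  obtain ⟨n, ⟨i, hi, hxi⟩, hn⟩ := (hseq.and hratio).exists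
  rw [hxi, dist_seq_apex_div_scale_of_ne hi] at hn
  refine ⟨i, (hseq.and hratio).mono fun m ⟨⟨j, hj, hxj⟩, hm⟩ => ?_⟩
  rw [hxj, dist_seq_apex_div_scale_of_ne hj] at hm
  rw [hxj, label_injective (hm.trans hn.symm)]

theorem exists_classOf_seq_eq {x : ℕ → ConeSpace H i₀} (hx : x ∈ SeqInf scale apex) :
    ∃ i, classOf scale apex (seq H i₀ i) = classOf scale apex x := by
  obtain ⟨hdist, L, hL⟩ := hx
  have hL₀ : 0 ≤ L := ge_of_tendsto' hL fun n => div_nonneg dist_nonneg (scale_pos n).le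
  rcases hL₀.eq_or_lt with rfl | hpos
  · refine ⟨i₀, ?_⟩
    rw [classOf_eq_rootClass scale_pos seq_mem_rootClass,
      classOf_eq_rootClass scale_pos ⟨hdist, hL⟩]
  · obtain ⟨i, hi⟩ := exists_eventuallyEq_seq hpos hL
    exact ⟨i, (classOf_eq_classOf_iff scale_pos ⟨hdist, L, hL⟩).2
      (equivSeq_of_eventuallyEq hi.symm)⟩

theorem equivSeq_seq_iff : EquivSeq scale (seq H i₀ i) (seq H i₀ j) ↔ i = j := by
  refine ⟨fun h => by_contra fun hij => ?_, fun h => h ▸ equivSeq_refl _ _⟩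
  have := ge_of_tendsto' h fun m =>
    (one_le_max_weight hij m).trans (max_weight_le_dist_seq_div_scale hij m)
  norm_num at this

theorem mutuallyStable_seq_iff (hi : i ≠ i₀) (hj : j ≠ i₀) (hij : i ≠ j) :
    MutuallyStable scale (seq H i₀ i) (seq H i₀ j) ↔ H.Adj i j := by
  refine ⟨fun ⟨L, hL⟩ => by_contra fun hadj => ?_, fun hadj => ⟨label i + label j,
    tendsto_const_nhds.congr fun m => by
      rw [dist_seq_seq_div_scale hi hj hij, if_neg fun h => h.2 hadj]⟩⟩
  have hratio (m : ℕ) : dist (seq H i₀ i m) (seq H i₀ j m) / scale m =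
      if Odd m then max (label i) (label j) else label i + label j := by
    simp only [dist_seq_seq_div_scale hi hj hij, hadj, not_false_eq_true, and_true]
  have hevens : Tendsto (fun t : ℕ => 2 * t) atTop atTop :=
    (strictMono_mul_left_of_pos two_pos).tendsto_atTop
  have hodds : Tendsto (fun t : ℕ => 2 * t + 1) atTop atTop := (tendsto_add_atTop_nat 1).comp hevens
  have heven : label i + label j = L :=
    tendsto_const_nhds_iff.1 <| (hL.comp hevens).congr fun t => by simp [hratio]
  have hodd : max (label i) (label j) = L :=
    tendsto_const_nhds_iff.1 <| (hL.comp hodds).congr fun t => by simp [hratio]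
  have hlt : max (label i) (label j) < label i + label j :=
    max_lt (lt_add_of_pos_right _ ((one_le_label j).trans_lt' one_pos))
      (lt_add_of_pos_left _ ((one_le_label i).trans_lt' one_pos))
  exact hlt.ne (hodd.trans heven.symm)

theorem adj_iff_mutuallyStable (hroot : ∀ i ≠ i₀, H.Adj i₀ i) (i j : ι) :
    H.Adj i j ↔ i ≠ j ∧ MutuallyStable scale (seq H i₀ i) (seq H i₀ j) := by
  rcases eq_or_ne i j with rfl | hij
  · exact iff_of_false H.irrefl fun h => h.1 rfl
  have hstable (k : ι) : MutuallyStable scale (seq H i₀ i₀) (seq H i₀ k) :=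
    mutuallyStable_of_mem_rootClass scale_pos seq_mem_rootClass (seq_mem_seqInf k)
  rcases eq_or_ne i i₀ with rfl | hi
  · exact iff_of_true (hroot j hij.symm) ⟨hij, hstable j⟩
  rcases eq_or_ne j i₀ with rfl | hj
  · exact iff_of_true (hroot i hi).symm ⟨hij, (hstable i).symm⟩
  rw [mutuallyStable_seq_iff hi hj hij, and_iff_right hij]

theorem isRootedCluster (hroot : ∀ i ≠ i₀, H.Adj i₀ i) : IsRootedCluster H i₀ := by
  have hclass (i j : ι) :
      classOf scale apex (seq H i₀ i) = classOf scale apex (seq H i₀ j) ↔ i = j :=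
    (classOf_eq_classOf_iff scale_pos (seq_mem_seqInf j)).trans equivSeq_seq_iff
  refine ⟨ConeSpace H i₀, inferInstance, unboundedSpace_of_tendsto_dist (tendsto_dist_seq_atTop i₀),
    scale, scalingSeq_scale, apex, fun i => classOf scale apex (seq H i₀ i),
    fun i j h => (hclass i j).1 h, fun i => ⟨_, seq_mem_seqInf i, rfl⟩, ?_,
    classOf_eq_rootClass scale_pos seq_mem_rootClass, fun i j => ?_⟩
  · rintro u ⟨x, hx, rfl⟩
    exact exists_classOf_seq_eq hx
  · rw [adjacentCl_classOf_iff scale_pos (seq_mem_seqInf i) (seq_mem_seqInf j), Ne, hclass,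
      adj_iff_mutuallyStable hroot]

end ConeSpace

/-- Corollary c2.2.22. A finite rooted graph `G(rt)` is isomorphic
(as a rooted graph) to the rooted cluster `G_{X,r̃}(ν₀)` of some unbounded metric
space and scaling sequence iff the root `rt` is a dominating vertex of `G`. -/
theorem finite_rooted_cluster_iff_dominating {V : Type*} [Fintype V]
    (G : SimpleGraph V) (rt : V) :
    (∃ (X : Type) (_ : MetricSpace X), UnboundedSpace X ∧
      ∃ r : ℕ → ℝ, ScalingSeq r ∧ ∃ p : X, ∃ f : V → Set (ℕ → X),
        Function.Injective f ∧ (∀ a, f a ∈ VertexSet r p) ∧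
        (∀ u ∈ VertexSet r p, ∃ a, f a = u) ∧
        f rt = rootClass r p ∧
        (∀ a b : V, G.Adj a b ↔ AdjacentCl r p (f a) (f b))) ↔
    (∀ v : V, v ≠ rt → G.Adj rt v) := by
  refine ⟨IsRootedCluster.adj_root, fun hroot => ?_⟩
  let e := SimpleGraph.Iso.map (Fintype.equivFin V) G
  refine IsRootedCluster.of_iso e (ConeSpace.isRootedCluster fun i hi => ?_)
  obtain ⟨v, rfl⟩ := e.surjective i
  exact e.map_adj_iff.2 (hroot v (ne_of_apply_ne e hi))
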